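/- Let G be a finite abelian group (or more generally, let φ be a one-dimensional character of a finite group G) and let n be a positive divisor of exp(G). Then ∑_{ρ ⊆ π(n)} (−1)^{|ρ|} ⟨Ψ^{n(ρ)}(φ), 1_G⟩ equals 1 if n divides o(φ), and 0 otherwise. -/

import Mathlib

/-!
The average of `g ↦ φ (g ^ m)` over `G` is the indicator of `orderOf φ ∣ m`, and `d = orderOf φ`
divides `n(ρ)` exactly when `v_p(d) < v_p(n)` for every `p ∈ ρ`. The alternating sum over
`ρ ⊆ π(n)` is therefore the inclusion–exclusion expansion of `∏_{p ∈ π(n)} (1 - [v_p(d) < v_p(n)])`,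
the indicator of `v_p(n) ≤ v_p(d)` for all `p ∣ n`, that is of `n ∣ d`.
-/

/-- `nrho N n ρ` is the integer with `q`-adic valuation `v_q(n) - 1` for `q ∈ ρ`
and `v_q(N)` for primes `q ∉ ρ`. -/
def nrho (N n : ℕ) (ρ : Finset ℕ) : ℕ :=
  ∏ p ∈ N.primeFactors, p ^ (if p ∈ ρ then n.factorization p - 1 else N.factorization p)

open Finset

lemma card_inv_mul_sum_apply_pow {G K : Type*} [Group G] [Fintype G] [Field K] [CharZero K]
    (φ : G →* Kˣ) (m : ℕ) :
    (Fintype.card G : K)⁻¹ * ∑ g : G, ((φ (g ^ m) : Kˣ) : K) =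
      if orderOf φ ∣ m then 1 else 0 := by
  classical
  have hsum : ∑ g : G, ((φ (g ^ m) : Kˣ) : K) = ∑ g : G, (Units.coeHom K).comp (φ ^ m) g := by
    simp [map_pow]
  have htrivial : (Units.coeHom K).comp (φ ^ m) = 1 ↔ orderOf φ ∣ m := by
    rw [orderOf_dvd_iff_pow_eq_one, ← (Units.coeHom K).comp_one,
      MonoidHom.cancel_left Units.val_injective]
  rw [hsum, sum_hom_units, if_congr htrivial rfl rfl]
  split_ifs
  · exact inv_mul_cancel₀ (Nat.cast_ne_zero.mpr Fintype.card_ne_zero)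
  · rw [Nat.cast_zero, mul_zero]

lemma MonoidHom.orderOf_dvd_exponent {G M : Type*} [Monoid G] [CommMonoid M] (φ : G →* M) :
    orderOf φ ∣ Monoid.exponent G :=
  orderOf_dvd_of_pow_eq_one <| MonoidHom.ext fun g => by
    rw [MonoidHom.pow_apply, ← map_pow, Monoid.pow_exponent_eq_one, map_one, MonoidHom.one_apply]

lemma nrho_ne_zero (N n : ℕ) (ρ : Finset ℕ) : nrho N n ρ ≠ 0 :=
  prod_ne_zero_iff.mpr fun _ hp => pow_ne_zero _ (Nat.prime_of_mem_primeFactors hp).pos.ne'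

lemma nrho_factorization (N n : ℕ) (ρ : Finset ℕ) (q : ℕ) :
    (nrho N n ρ).factorization q =
      if q ∈ N.primeFactors then
        (if q ∈ ρ then n.factorization q - 1 else N.factorization q) else 0 := by
  classical
  rw [nrho, Nat.factorization_prod
    (fun p hp => pow_ne_zero _ (Nat.prime_of_mem_primeFactors hp).pos.ne'), sum_apply']
  have hterm : ∀ p ∈ N.primeFactors,
      (p ^ (if p ∈ ρ then n.factorization p - 1 else N.factorization p)).factorization q =
        if p = q then (if p ∈ ρ then n.factorization p - 1 else N.factorization p) else 0 := by
    intro p hp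
    rw [(Nat.prime_of_mem_primeFactors hp).factorization_pow, Finsupp.single_apply]
  rw [sum_congr rfl hterm, sum_ite_eq']

lemma dvd_nrho_iff {d N n : ℕ} {ρ : Finset ℕ} (hN : N ≠ 0) (hdN : d ∣ N)
    (hρ : ρ ⊆ N.primeFactors) :
    d ∣ nrho N n ρ ↔ ∀ p ∈ ρ, d.factorization p ≤ n.factorization p - 1 := by
  have hd : d ≠ 0 := ne_zero_of_dvd_ne_zero hN hdN
  have hdNf : d.factorization ≤ N.factorization := (Nat.factorization_le_iff_dvd hd hN).mpr hdN
  rw [← Nat.factorization_le_iff_dvd hd (nrho_ne_zero N n ρ)]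
  constructor
  · intro h p hp
    simpa [nrho_factorization, hρ hp, hp] using h p
  · intro h q
    rw [nrho_factorization]
    split_ifs with hqN hq
    · exact h q hq
    · exact hdNf q
    · have hq0 : N.factorization q = 0 := Finsupp.notMem_support_iff.mp hqN
      exact (hdNf q).trans hq0.le

lemma sum_powerset_neg_one_pow_card_mul_ite {α R : Type*} [DecidableEq α] [CommRing R]
    (s : Finset α) (P : α → Prop) [DecidablePred P] :
    ∑ t ∈ s.powerset, (-1 : R) ^ t.card * (if ∀ a ∈ t, P a then 1 else 0) =
      if ∀ a ∈ s, ¬ P a then 1 else 0 := by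
  have hexpand := prod_add (fun a => -(if P a then 1 else 0 : R)) (fun _ => 1) s
  simp only [prod_const_one, mul_one, prod_neg, prod_boole] at hexpand
  rw [← hexpand, ← prod_boole]
  refine prod_congr rfl fun a _ => ?_
  split_ifs <;> ring

lemma forall_primeFactors_not_le_sub_one_iff_dvd {n d : ℕ} (hn : n ≠ 0) (hd : d ≠ 0) :
    (∀ p ∈ n.primeFactors, ¬ d.factorization p ≤ n.factorization p - 1) ↔ n ∣ d := by
  rw [← Nat.factorization_le_iff_dvd hn hd, Finsupp.le_iff, Nat.support_factorization]
  refine forall₂_congr fun p hp => ?_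
  have hpos : n.factorization p ≠ 0 :=
    Finsupp.mem_support_iff.mp (by rwa [Nat.support_factorization])
  omega

theorem stmt_18_general (G : Type) [Group G] [Fintype G] (φ : G →* ℂˣ)
    (n : ℕ) (hn : n ∣ Monoid.exponent G) :
    (∑ ρ ∈ n.primeFactors.powerset, (-1 : ℂ) ^ ρ.card *
        ((Fintype.card G : ℂ)⁻¹ *
          ∑ g : G, ((φ (g ^ nrho (Monoid.exponent G) n ρ) : ℂˣ) : ℂ))) =
      if n ∣ orderOf φ then 1 else 0 := by
  classical
  have hN : Monoid.exponent G ≠ 0 := Monoid.exponent_ne_zero_of_finite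
  have hdN := MonoidHom.orderOf_dvd_exponent φ
  have hsummand : ∀ ρ ∈ n.primeFactors.powerset,
      (-1 : ℂ) ^ ρ.card * ((Fintype.card G : ℂ)⁻¹ *
          ∑ g : G, ((φ (g ^ nrho (Monoid.exponent G) n ρ) : ℂˣ) : ℂ)) =
        (-1 : ℂ) ^ ρ.card *
          if ∀ p ∈ ρ, (orderOf φ).factorization p ≤ n.factorization p - 1 then 1 else 0 := by
    intro ρ hρ
    have hρN := (mem_powerset.mp hρ).trans (Nat.primeFactors_mono hn hN)
    rw [card_inv_mul_sum_apply_pow, if_congr (dvd_nrho_iff hN hdN hρN) rfl rfl]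
    congr
  rw [sum_congr rfl hsummand, sum_powerset_neg_one_pow_card_mul_ite,
    if_congr (forall_primeFactors_not_le_sub_one_iff_dvd (ne_zero_of_dvd_ne_zero hN hn)
      (ne_zero_of_dvd_ne_zero hN hdN)) rfl rfl]

theorem stmt_18 (G : Type) [Group G] [Fintype G] (φ : G →* ℂˣ)
    (n : ℕ) (hn0 : 0 < n) (hn : n ∣ Monoid.exponent G) :
    (∑ ρ ∈ n.primeFactors.powerset, (-1 : ℂ) ^ ρ.card *
        ((Fintype.card G : ℂ)⁻¹ *
          ∑ g : G, ((φ (g ^ nrho (Monoid.exponent G) n ρ) : ℂˣ) : ℂ))) =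
      if n ∣ orderOf φ then 1 else 0 :=
  stmt_18_general G φ n hn
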